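/- arXiv:1908.08182 — 4 statements merged into one kernel-verified Lean document; each statement's English description precedes it below -/
import Mathlib

section
/- In the setting of the reduced equation t ∂w/∂t = λ(t,x)w + a₁(t,x,w,∂w/∂x)w + b₁(t,x,w,∂w/∂x)(∂w/∂x), suppose Re λ(t,x) < −2a on [0,σ*] × D_{R₀*} for some a > 0, |a₁(t,x,w,q)| ≤ A₀μ(t) + A₁|w| + A₂|q| and |b₁(t,x,w,q)| ≤ B₀μ(t) + B₁|w| + B₂|q| on Ω*, and let w ∈ 𝒳₁((0,σ₀) × D_{R₀}) be a solution satisfying limsup_{R→+0} [ lim_{σ→+0} ( (1/R²) sup_{(0,σ)×D_R} |w(t,x)| ) ] = 0. Set q = ∂w/∂x, a(t,x) = a₁(t,x,w(t,x),q(t,x)), b(t,x) = b₁(t,x,w(t,x),q(t,x)), γ(t,x) = ∂λ/∂x + ∂a/∂x, ℓ(t,x) = ∂b/∂x, and for 0 < σ < σ₀, 0 < R < R₀ set A = sup_{(0,σ)×D_R}|a|, Γ = sup_{(0,σ)×D_R}|γ|, L = sup_{(0,σ)×D_R}|ℓ|, r₁ = sup_{(0,σ)×D_R}|w|, r₂ =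 sup_{(0,σ)×D_R}|q|. Then by taking σ > 0 and R > 0 sufficiently small one obtains A + L < a and B₀φ(σ) + (B₁/a + B₂Γ/a²)r₁ + (B₂/a)r₂ < R/2, where φ(t) = ∫₀^t μ(s)/s ds. -/
open Set MeasureTheory Complex

noncomputable section

/-- The open disc of radius `r` centred at `0` in `ℂ`. -/
def Disc (r : ℝ) : Set ℂ := {z : ℂ | ‖z‖ < r}

/-- `μ` is a weight function on `(0, T₀]`: positive, continuous, increasing,
with `∫₀^{T₀} μ(s)/s ds < ∞`. -/
def IsWeight (T₀ : ℝ) (μ : ℝ → ℝ) : Prop :=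
  (∀ t ∈ Set.Ioc (0:ℝ) T₀, 0 < μ t) ∧
    ContinuousOn μ (Set.Ioc 0 T₀) ∧
    MonotoneOn μ (Set.Ioc 0 T₀) ∧
    MeasureTheory.IntegrableOn (fun s => μ s / s) (Set.Ioc 0 T₀)

/-- `φ(t) = ∫₀ᵗ μ(s)/s ds`. -/
def phi (μ : ℝ → ℝ) (t : ℝ) : ℝ := ∫ s in Set.Ioc (0:ℝ) t, μ s / s

/-!
The bound for `∂λ/∂x` comes from compactness and the Cauchy estimate and does not depend on any
later choice. Condition (2.7) gives `|w| ≤ ε ρ²` on `(0, σ) × D_ρ`; by Cauchy, `|∂w/∂x| ≤ 2 ε ρ` on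
`D_{ρ/2}`, so `a` and `b` are `O(μ(σ) + ε ρ)` there, and a second Cauchy estimate makes `∂a/∂x` and
`∂b/∂x` of size `O(μ(σ)/ρ + ε)` on `D_{ρ/4}`. Hence one chooses `ε` first, then `ρ` by (2.7), then
`σ` so small that `μ(σ)` and `φ(σ)` are negligible against `ρ`: both tend to `0`, since a weight
satisfies `μ(t) ≤ 2 φ(2t)`.
-/

open Metric Filter Topology

theorem disc_eq_ball (r : ℝ) : Disc r = ball 0 r := by
  ext z
  simp [Disc]

theorem disc_mono : Monotone Disc := fun _ _ h _ hz => lt_of_lt_of_le hz h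

theorem norm_deriv_le_of_forall_norm_le {f : ℂ → ℂ} {c x : ℂ} {r M : ℝ}
    (hf : DifferentiableOn ℂ f (ball c r)) (hM : ∀ z ∈ ball c r, ‖f z‖ ≤ M)
    (hx : x ∈ ball c (r / 2)) : ‖deriv f x‖ ≤ 2 * M / r := by
  have hr : 0 < r / 2 := pos_of_mem_ball hx
  have hsub : closedBall x (r / 2) ⊆ ball c r := closedBall_subset_ball' (by
    rw [mem_ball] at hx; linarith)
  have := norm_deriv_le_of_forall_mem_sphere_norm_le hr (hf.diffContOnCl_ball hsub)
    fun z hz => hM z (hsub (sphere_subset_closedBall hz))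
  rwa [div_div_eq_mul_div, mul_comm] at this

theorem exists_norm_deriv_le_of_continuousOn {X : Type*} [TopologicalSpace X] {K : Set X}
    (hK : IsCompact K) {F : X → ℂ → ℂ} {r : ℝ}
    (hc : ContinuousOn (fun p : X × ℂ => F p.1 p.2) (K ×ˢ closedBall 0 r))
    (hd : ∀ t ∈ K, DifferentiableOn ℂ (F t) (ball 0 r)) :
    ∃ C, ∀ t ∈ K, ∀ x ∈ ball (0 : ℂ) (r / 2), ‖deriv (F t) x‖ ≤ C := by
  obtain ⟨M, hM⟩ := (hK.prod (isCompact_closedBall 0 r)).exists_bound_of_continuousOn hc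
  exact ⟨2 * M / r, fun t ht x hx => norm_deriv_le_of_forall_norm_le (hd t ht)
    (fun z hz => hM (t, z) ⟨ht, ball_subset_closedBall hz⟩) hx⟩

theorem norm_jet_le_of_norm_le_mul_sq {v : ℂ → ℂ} {ε ρ : ℝ} (hε : 0 ≤ ε) (hρ1 : ρ ≤ 1)
    (hv : DifferentiableOn ℂ v (Disc ρ)) (hvε : ∀ z ∈ Disc ρ, ‖v z‖ ≤ ε * ρ ^ 2) :
    ∀ z ∈ Disc (ρ / 2), ‖v z‖ ≤ ε * ρ ∧ ‖deriv v z‖ ≤ 2 * ε * ρ := by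
  intro z hz
  have hρ : 0 < ρ := by linarith [norm_nonneg z, show ‖z‖ < ρ / 2 from hz]
  refine ⟨(hvε z (disc_mono (by linarith) hz)).trans (by nlinarith [mul_nonneg hε hρ.le]), ?_⟩
  rw [disc_eq_ball] at hv hvε hz
  calc ‖deriv v z‖ ≤ 2 * (ε * ρ ^ 2) / ρ := norm_deriv_le_of_forall_norm_le hv hvε hz
    _ = 2 * ε * ρ := by field_simp

theorem norm_comp_jet_le {F : ℂ → ℂ → ℂ → ℂ} {v : ℂ → ℂ} {R ρ r η θ c₀ c₁ c₂ : ℝ}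
    (hF : DifferentiableOn ℂ (fun p : ℂ × ℂ × ℂ => F p.1 p.2.1 p.2.2)
      (Disc R ×ˢ Disc ρ ×ˢ Disc ρ))
    (hFbd : ∀ x ∈ Disc R, ∀ w ∈ Disc ρ, ∀ q ∈ Disc ρ, ‖F x w q‖ ≤ c₀ + c₁ * ‖w‖ + c₂ * ‖q‖)
    (hc₁ : 0 ≤ c₁) (hc₂ : 0 ≤ c₂) (hrR : r ≤ R) (hv : DifferentiableOn ℂ v (Disc r))
    (hjet : ∀ z ∈ Disc r, ‖v z‖ ≤ η ∧ ‖deriv v z‖ ≤ θ) (hη : η < ρ) (hθ : θ < ρ)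
    {x : ℂ} (hx : x ∈ Disc (r / 2)) :
    ‖F x (v x) (deriv v x)‖ ≤ c₀ + c₁ * η + c₂ * θ ∧
      ‖deriv (fun z => F z (v z) (deriv v z)) x‖ ≤ 2 * (c₀ + c₁ * η + c₂ * θ) / r := by
  simp only [disc_eq_ball] at *
  have hmaps : MapsTo (fun z => (z, v z, deriv v z)) (ball 0 r)
      (ball 0 R ×ˢ ball 0 ρ ×ˢ ball 0 ρ) := fun z hz =>
    ⟨ball_subset_ball hrR hz, mem_ball_zero_iff.2 ((hjet z hz).1.trans_lt hη),
      mem_ball_zero_iff.2 ((hjet z hz).2.trans_lt hθ)⟩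
  have hbd : ∀ z ∈ ball (0 : ℂ) r, ‖F z (v z) (deriv v z)‖ ≤ c₀ + c₁ * η + c₂ * θ := by
    intro z hz
    obtain ⟨hzR, hvz, hv'z⟩ := hmaps hz
    calc ‖F z (v z) (deriv v z)‖ ≤ c₀ + c₁ * ‖v z‖ + c₂ * ‖deriv v z‖ := hFbd z hzR _ hvz _ hv'z
      _ ≤ c₀ + c₁ * η + c₂ * θ := by gcongr; exacts [(hjet z hz).1, (hjet z hz).2]
  have hdiff : DifferentiableOn ℂ (fun z => F z (v z) (deriv v z)) (ball 0 r) :=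
    hF.comp (differentiableOn_id.prodMk (hv.prodMk (hv.deriv isOpen_ball))) hmaps
  exact ⟨hbd x (ball_subset_ball (by linarith [pos_of_mem_ball hx]) hx),
    norm_deriv_le_of_forall_norm_le hdiff hbd hx⟩

theorem norm_comp_jet_le_on_Ioo {F : ℝ → ℂ → ℂ → ℂ → ℂ} {w : ℝ → ℂ → ℂ} {μ : ℝ → ℝ}
    {T R ρ' σ ρ ε c₀ c₁ c₂ : ℝ}
    (hF : ∀ t ∈ Icc 0 T, DifferentiableOn ℂ (fun p : ℂ × ℂ × ℂ => F t p.1 p.2.1 p.2.2)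
      (Disc R ×ˢ Disc ρ' ×ˢ Disc ρ'))
    (hFbd : ∀ t ∈ Ioc 0 T, ∀ x ∈ Disc R, ∀ w' ∈ Disc ρ', ∀ q' ∈ Disc ρ',
      ‖F t x w' q'‖ ≤ c₀ * μ t + c₁ * ‖w'‖ + c₂ * ‖q'‖)
    (hμ : MonotoneOn μ (Ioc 0 T)) (hc₀ : 0 ≤ c₀) (hc₁ : 0 ≤ c₁) (hc₂ : 0 ≤ c₂)
    (hσ : 0 < σ) (hσT : σ ≤ T) (hρ1 : ρ ≤ 1) (hρR : ρ ≤ R) (hε : 0 ≤ ε) (hερ' : 2 * ε < ρ')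
    (hw : ∀ t ∈ Ioo 0 σ, DifferentiableOn ℂ (w t) (Disc ρ))
    (hwε : ∀ t ∈ Ioo 0 σ, ∀ z ∈ Disc ρ, ‖w t z‖ ≤ ε * ρ ^ 2) :
    ∀ t ∈ Ioo 0 σ, ∀ x ∈ Disc (ρ / 4),
      ‖F t x (w t x) (deriv (w t) x)‖ ≤ c₀ * μ σ + c₁ * (ε * ρ) + c₂ * (2 * ε * ρ) ∧
      ‖deriv (fun z => F t z (w t z) (deriv (w t) z)) x‖ ≤
        4 * (c₀ * μ σ + c₁ * (ε * ρ) + c₂ * (2 * ε * ρ)) / ρ := by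
  intro t ht x hx
  have hρ : 0 < ρ := by linarith [norm_nonneg x, show ‖x‖ < ρ / 4 from hx]
  have htT : t ∈ Ioc 0 T := ⟨ht.1, ht.2.le.trans hσT⟩
  have hμt : μ t ≤ μ σ := hμ htT ⟨hσ, hσT⟩ ht.2.le
  have h := norm_comp_jet_le (hF t (Ioc_subset_Icc_self htT))
    (fun x hx w' hw' q' hq' => (hFbd t htT x hx w' hw' q' hq').trans (by gcongr)) hc₁ hc₂
    (by linarith) ((hw t ht).mono (disc_mono (by linarith)))
    (norm_jet_le_of_norm_le_mul_sq hε hρ1 (hw t ht) (hwε t ht)) (by nlinarith) (by nlinarith)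
    (disc_mono (by linarith) hx) (c₀ := c₀ * μ σ)
  exact ⟨h.1, h.2.trans_eq (by field_simp; ring)⟩

namespace IsWeight

variable {T : ℝ} {μ : ℝ → ℝ}

theorem tendsto_phi (hμ : IsWeight T μ) (hT : 0 < T) : Tendsto (phi μ) (𝓝[>] 0) (𝓝 0) := by
  have hcont : ContinuousOn (phi μ) (Icc 0 T) :=
    intervalIntegral.continuousOn_primitive
      ((integrableOn_Icc_iff_integrableOn_Ioc (by simp)).2 hμ.2.2.2)
  have h := (hcont 0 (left_mem_Icc.2 hT.le)).mono_of_mem_nhdsWithin (Icc_mem_nhdsGT hT)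
  simpa [phi] using h.tendsto

theorem le_two_mul_phi (hμ : IsWeight T μ) {t : ℝ} (ht : 0 < t) (htT : 2 * t ≤ T) :
    μ t ≤ 2 * phi μ (2 * t) := by
  obtain ⟨hpos, -, hmono, hint⟩ := hμ
  have hnonneg : 0 ≤ᵐ[volume.restrict (Ioc 0 (2 * t))] fun s => μ s / s := by
    filter_upwards [ae_restrict_mem measurableSet_Ioc] with s hs
    exact div_nonneg (hpos s ⟨hs.1, hs.2.trans htT⟩).le hs.1.le
  have hlow : ∀ s ∈ Ioc t (2 * t), μ t / (2 * t) ≤ μ s / s := fun s hs =>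
    div_le_div₀ (hpos s ⟨ht.trans hs.1, hs.2.trans htT⟩).le
      (hmono ⟨ht, by linarith⟩ ⟨ht.trans hs.1, hs.2.trans htT⟩ hs.1.le) (ht.trans hs.1) hs.2
  calc μ t = (2 * t - t) * (μ t / (2 * t)) * 2 := by field_simp; ring
    _ ≤ (∫ s in Ioc t (2 * t), μ s / s) * 2 := by
      gcongr
      rw [← Real.volume_real_Ioc_of_le (by linarith), ← smul_eq_mul, ← setIntegral_const]
      exact setIntegral_mono_on (integrableOn_const measure_Ioc_lt_top.ne)
        (hint.mono_set (Ioc_subset_Ioc ht.le htT)) measurableSet_Ioc hlow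
    _ ≤ phi μ (2 * t) * 2 := by
      gcongr
      exact setIntegral_mono_set (hint.mono_set (Ioc_subset_Ioc le_rfl htT)) hnonneg
        (Ioc_subset_Ioc ht.le le_rfl).eventuallyLE
    _ = 2 * phi μ (2 * t) := mul_comm _ _

theorem tendsto_zero (hμ : IsWeight T μ) (hT : 0 < T) : Tendsto μ (𝓝[>] 0) (𝓝 0) := by
  have hdouble : Tendsto (fun t : ℝ => 2 * t) (𝓝[>] 0) (𝓝[>] 0) := by
    refine tendsto_nhdsWithin_iff.2 ⟨?_, eventually_mem_nhdsWithin.mono fun t ht => ?_⟩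
    · simpa using
        (tendsto_nhdsWithin_of_tendsto_nhds (tendsto_id (x := 𝓝 (0 : ℝ)))).const_mul (2 : ℝ)
    · exact mul_pos two_pos (mem_Ioi.1 ht)
  have hupper : Tendsto (fun t => 2 * phi μ (2 * t)) (𝓝[>] 0) (𝓝 0) := by
    simpa using ((hμ.tendsto_phi hT).comp hdouble).const_mul 2
  refine tendsto_of_tendsto_of_tendsto_of_le_of_le' tendsto_const_nhds hupper ?_ ?_
  · filter_upwards [Ioc_mem_nhdsGT hT] with t ht using (hμ.1 t ht).le
  · filter_upwards [Ioo_mem_nhdsGT (half_pos hT)] with t ht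
    exact hμ.le_two_mul_phi ht.1 (by linarith [ht.2])

end IsWeight

theorem eventually_mul_lt (c : ℝ) {d : ℝ} (hd : 0 < d) : ∀ᶠ ε in 𝓝[>] 0, c * ε < d :=
  (ContinuousAt.eventually_lt (by fun_prop) continuousAt_const (by simpa using hd)).filter_mono
    nhdsWithin_le_nhds

theorem exists_small_time {μ φ : ℝ → ℝ} (hμ : Tendsto μ (𝓝[>] 0) (𝓝 0))
    (hφ : Tendsto φ (𝓝[>] 0) (𝓝 0)) {a A₀ A₁ A₂ B₀ B₁ B₂ K₁ K₂ ε ρ τ : ℝ} (hτ : 0 < τ)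
    (hρ : 0 < ρ) (hρ1 : ρ ≤ 1) (hε : 0 ≤ ε) (hA : 0 ≤ A₁ + 2 * A₂)
    (hΓ : 4 * (A₁ + 2 * A₂) * ε < 1) (hAL : (A₁ + 2 * A₂ + 4 * (B₁ + 2 * B₂)) * ε < a)
    (hlast : (K₁ + 2 * K₂) * ε < 1 / 8) :
    ∃ σ ∈ Ioo 0 τ,
      4 * (A₀ * μ σ + A₁ * (ε * ρ) + A₂ * (2 * ε * ρ)) / ρ < 1 ∧
      A₀ * μ σ + A₁ * (ε * ρ) + A₂ * (2 * ε * ρ) +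
        4 * (B₀ * μ σ + B₁ * (ε * ρ) + B₂ * (2 * ε * ρ)) / ρ < a ∧
      B₀ * φ σ + K₁ * (ε * ρ) + K₂ * (2 * ε * ρ) < ρ / 4 / 2 := by
  have hΓm : ∀ᶠ m in 𝓝 0, 4 * (A₀ * m + A₁ * (ε * ρ) + A₂ * (2 * ε * ρ)) / ρ < 1 := by
    refine ContinuousAt.eventually_lt (by fun_prop) continuousAt_const ?_
    calc 4 * (A₀ * 0 + A₁ * (ε * ρ) + A₂ * (2 * ε * ρ)) / ρ
        = 4 * (A₁ + 2 * A₂) * ε := by field_simp; ring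
      _ < 1 := hΓ
  have hALm : ∀ᶠ m in 𝓝 0, A₀ * m + A₁ * (ε * ρ) + A₂ * (2 * ε * ρ) +
      4 * (B₀ * m + B₁ * (ε * ρ) + B₂ * (2 * ε * ρ)) / ρ < a := by
    refine ContinuousAt.eventually_lt (by fun_prop) continuousAt_const ?_
    calc A₀ * 0 + A₁ * (ε * ρ) + A₂ * (2 * ε * ρ) +
          4 * (B₀ * 0 + B₁ * (ε * ρ) + B₂ * (2 * ε * ρ)) / ρ
        = (A₁ + 2 * A₂) * ε * ρ + 4 * (B₁ + 2 * B₂) * ε := by field_simp; ring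
      _ ≤ (A₁ + 2 * A₂) * ε + 4 * (B₁ + 2 * B₂) * ε :=
        add_le_add_left (mul_le_of_le_one_right (mul_nonneg hA hε) hρ1) _
      _ < a := by linarith
  have hlastp : ∀ᶠ p in 𝓝 0, B₀ * p + K₁ * (ε * ρ) + K₂ * (2 * ε * ρ) < ρ / 4 / 2 := by
    refine ContinuousAt.eventually_lt (by fun_prop) continuousAt_const ?_
    calc B₀ * 0 + K₁ * (ε * ρ) + K₂ * (2 * ε * ρ) = ρ * ((K₁ + 2 * K₂) * ε) := by ring
      _ < ρ * (1 / 8) := by gcongr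
      _ = ρ / 4 / 2 := by ring
  exact (Filter.Eventually.and (Ioo_mem_nhdsGT hτ) <|
    (hμ.eventually hΓm).and <| (hμ.eventually hALm).and (hφ.eventually hlastp)).exists

theorem choice_of_small_sigma_R_general
    (σs Rs ρs : ℝ) (hσs : 0 < σs) (hρs : 0 < ρs)
    (μ : ℝ → ℝ) (hμ : IsWeight σs μ)
    (lam : ℝ → ℂ → ℂ)
    (hlamc : ContinuousOn (fun p : ℝ × ℂ => lam p.1 p.2) (Set.Icc 0 σs ×ˢ Disc Rs))
    (hlamh : ∀ t ∈ Set.Icc (0:ℝ) σs, DifferentiableOn ℂ (lam t) (Disc Rs))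
    (a : ℝ) (ha : 0 < a)
    (a₁ b₁ : ℝ → ℂ → ℂ → ℂ → ℂ)
    (ha₁h : ∀ t ∈ Set.Icc (0:ℝ) σs,
      DifferentiableOn ℂ (fun p : ℂ × ℂ × ℂ => a₁ t p.1 p.2.1 p.2.2)
        (Disc Rs ×ˢ Disc ρs ×ˢ Disc ρs))
    (hb₁h : ∀ t ∈ Set.Icc (0:ℝ) σs,
      DifferentiableOn ℂ (fun p : ℂ × ℂ × ℂ => b₁ t p.1 p.2.1 p.2.2)
        (Disc Rs ×ˢ Disc ρs ×ˢ Disc ρs))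
    (A₀ A₁ A₂ B₀ B₁ B₂ : ℝ)
    (hA₀ : 0 < A₀) (hA₁ : 0 < A₁) (hA₂ : 0 < A₂)
    (hB₀ : 0 < B₀) (hB₁ : 0 < B₁) (hB₂ : 0 < B₂)
    (ha₁bd : ∀ t ∈ Set.Ioc (0:ℝ) σs, ∀ x ∈ Disc Rs, ∀ w' ∈ Disc ρs, ∀ q' ∈ Disc ρs,
      ‖a₁ t x w' q'‖ ≤ A₀ * μ t + A₁ * ‖w'‖ + A₂ * ‖q'‖)
    (hb₁bd : ∀ t ∈ Set.Ioc (0:ℝ) σs, ∀ x ∈ Disc Rs, ∀ w' ∈ Disc ρs, ∀ q' ∈ Disc ρs,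
      ‖b₁ t x w' q'‖ ≤ B₀ * μ t + B₁ * ‖w'‖ + B₂ * ‖q'‖)
    -- `w` : a solution in `𝒳₁((0,σ₀) × D_{R₀})` of the reduced equation
    (σ₀ R₀ : ℝ) (hσ₀ : 0 < σ₀) (hσ₀s : σ₀ < σs) (hR₀ : 0 < R₀) (hR₀s : R₀ < Rs)
    (w : ℝ → ℂ → ℂ)
    (hwH : ∀ t ∈ Set.Ioo (0:ℝ) σ₀, DifferentiableOn ℂ (w t) (Disc R₀))
    -- condition (2.7)
    (hsmall : ∀ ε > 0, ∃ ρ' > 0, ∀ ρ ∈ Set.Ioo (0:ℝ) ρ', ∃ σ > 0,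
      ∀ t ∈ Set.Ioo (0:ℝ) σ, ∀ x ∈ Disc ρ, ‖w t x‖ ≤ ε * ρ ^ 2) :
    ∃ σ ∈ Set.Ioo (0:ℝ) σ₀, ∃ R ∈ Set.Ioo (0:ℝ) R₀, ∃ A Γ L r₁ r₂ : ℝ,
      (∀ t ∈ Set.Ioo (0:ℝ) σ, ∀ x ∈ Disc R,
        ‖a₁ t x (w t x) (deriv (w t) x)‖ ≤ A ∧
        ‖deriv (fun z : ℂ => lam t z) x +
            deriv (fun z : ℂ => a₁ t z (w t z) (deriv (w t) z)) x‖ ≤ Γ ∧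
        ‖deriv (fun z : ℂ => b₁ t z (w t z) (deriv (w t) z)) x‖ ≤ L ∧
        ‖w t x‖ ≤ r₁ ∧ ‖deriv (w t) x‖ ≤ r₂) ∧
      A + L < a ∧
      B₀ * phi μ σ + (B₁ / a + B₂ * Γ / a ^ 2) * r₁ + (B₂ / a) * r₂ < R / 2 := by
  obtain ⟨C, hC⟩ : ∃ C, ∀ t ∈ Icc (0 : ℝ) σs, ∀ x ∈ Disc (R₀ / 2), ‖deriv (lam t) x‖ ≤ C := by
    simpa only [disc_eq_ball] using exists_norm_deriv_le_of_continuousOn isCompact_Icc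
      (hlamc.mono (prod_mono subset_rfl
        ((closedBall_subset_ball hR₀s).trans (disc_eq_ball Rs).ge)))
      fun t ht => (hlamh t ht).mono ((disc_eq_ball R₀).ge.trans (disc_mono hR₀s.le))
  have hpos : ∀ᶠ x in 𝓝[>] (0 : ℝ), 0 < x := eventually_mem_nhdsWithin
  obtain ⟨ε, hε, hερs, hεΓ, hεAL, hεlast⟩ : ∃ ε, 0 < ε ∧ 2 * ε < ρs ∧
      4 * (A₁ + 2 * A₂) * ε < 1 ∧ (A₁ + 2 * A₂ + 4 * (B₁ + 2 * B₂)) * ε < a ∧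
      (B₁ / a + B₂ * (C + 1) / a ^ 2 + 2 * (B₂ / a)) * ε < 1 / 8 :=
    (hpos.and <| (eventually_mul_lt _ hρs).and <|
      (eventually_mul_lt _ one_pos).and <| (eventually_mul_lt _ ha).and <|
        eventually_mul_lt _ (by norm_num)).exists
  obtain ⟨ρ', hρ', hwρ'⟩ := hsmall ε hε
  obtain ⟨ρ, hρ, hρρ', hρR₀, hρ1⟩ : ∃ ρ, 0 < ρ ∧ ρ < ρ' ∧ ρ < R₀ ∧ ρ < 1 :=
    (hpos.and (((eventually_lt_nhds hρ').and ((eventually_lt_nhds hR₀).and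
      (eventually_lt_nhds one_pos))).filter_mono nhdsWithin_le_nhds)).exists
  obtain ⟨σ₁, hσ₁, hwσ₁⟩ := hwρ' ρ ⟨hρ, hρρ'⟩
  obtain ⟨σ, ⟨hσ, hσσ⟩, hσΓ, hσAL, hσlast⟩ := exists_small_time (hμ.tendsto_zero hσs)
    (hμ.tendsto_phi hσs) (lt_min hσ₀ hσ₁) hρ hρ1.le hε.le (by positivity) hεΓ hεAL hεlast
    (A₀ := A₀) (B₀ := B₀)
  have hσσ₀ : σ < σ₀ := hσσ.trans_le (min_le_left _ _)
  have hσs' : σ ≤ σs := (hσσ₀.trans hσ₀s).le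
  have hw (t : ℝ) (ht : t ∈ Ioo 0 σ) : DifferentiableOn ℂ (w t) (Disc ρ) :=
    (hwH t ⟨ht.1, ht.2.trans hσσ₀⟩).mono (disc_mono hρR₀.le)
  have hwε (t : ℝ) (ht : t ∈ Ioo 0 σ) : ∀ z ∈ Disc ρ, ‖w t z‖ ≤ ε * ρ ^ 2 :=
    hwσ₁ t ⟨ht.1, ht.2.trans (hσσ.trans_le (min_le_right _ _))⟩
  have hρRs : ρ ≤ Rs := by linarith
  have ha := norm_comp_jet_le_on_Ioo ha₁h ha₁bd hμ.2.2.1 hA₀.le hA₁.le hA₂.le hσ hσs' hρ1.le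
    hρRs hε.le hερs hw hwε
  have hb := norm_comp_jet_le_on_Ioo hb₁h hb₁bd hμ.2.2.1 hB₀.le hB₁.le hB₂.le hσ hσs' hρ1.le
    hρRs hε.le hερs hw hwε
  refine ⟨σ, ⟨hσ, hσσ₀⟩, ρ / 4, ⟨by positivity, by linarith⟩, _, C + 1, _, ε * ρ, 2 * ε * ρ,
    fun t ht x hx => ?_, hσAL, hσlast⟩
  have hlam : ‖deriv (lam t) x‖ ≤ C :=
    hC t ⟨ht.1.le, hσs'.trans' ht.2.le⟩ x (disc_mono (by linarith) hx)
  exact ⟨(ha t ht x hx).1,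
    (norm_add_le _ _).trans (add_le_add hlam ((ha t ht x hx).2.trans hσΓ.le)), (hb t ht x hx).2,
    norm_jet_le_of_norm_le_mul_sq hε.le hρ1.le (hw t ht) (hwε t ht) x (disc_mono (by linarith) hx)⟩

/-- Lemma 2.6 : in the setting of the reduced equation, taking `σ > 0` and `R > 0`
sufficiently small one obtains `A + L < a` and
`B₀ φ(σ) + (B₁/a + B₂Γ/a²) r₁ + (B₂/a) r₂ < R/2`, where
`A, Γ, L, r₁, r₂` are the suprema of `|a(t,x)|, |γ(t,x)|, |ℓ(t,x)|, |w(t,x)|, |q(t,x)|`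
over `(0,σ) × D_R` (expressed below as least upper bounds that satisfy the
required inequalities), with
`q = ∂w/∂x`, `a(t,x) = a₁(t,x,w,q)`, `b(t,x) = b₁(t,x,w,q)`,
`γ = ∂λ/∂x + ∂a/∂x`, `ℓ = ∂b/∂x`. -/
theorem choice_of_small_sigma_R
    (σs Rs ρs : ℝ) (hσs : 0 < σs) (hRs : 0 < Rs) (hρs : 0 < ρs)
    (μ : ℝ → ℝ) (hμ : IsWeight σs μ)
    (lam : ℝ → ℂ → ℂ)
    (hlamc : ContinuousOn (fun p : ℝ × ℂ => lam p.1 p.2) (Set.Icc 0 σs ×ˢ Disc Rs))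
    (hlamh : ∀ t ∈ Set.Icc (0:ℝ) σs, DifferentiableOn ℂ (lam t) (Disc Rs))
    (a : ℝ) (ha : 0 < a)
    (hlam2a : ∀ t ∈ Set.Icc (0:ℝ) σs, ∀ x ∈ Disc Rs, (lam t x).re < -(2 * a))
    (a₁ b₁ : ℝ → ℂ → ℂ → ℂ → ℂ)
    (ha₁c : ContinuousOn (fun p : ℝ × ℂ × ℂ × ℂ => a₁ p.1 p.2.1 p.2.2.1 p.2.2.2)
      (Set.Icc 0 σs ×ˢ Disc Rs ×ˢ Disc ρs ×ˢ Disc ρs))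
    (hb₁c : ContinuousOn (fun p : ℝ × ℂ × ℂ × ℂ => b₁ p.1 p.2.1 p.2.2.1 p.2.2.2)
      (Set.Icc 0 σs ×ˢ Disc Rs ×ˢ Disc ρs ×ˢ Disc ρs))
    (ha₁h : ∀ t ∈ Set.Icc (0:ℝ) σs,
      DifferentiableOn ℂ (fun p : ℂ × ℂ × ℂ => a₁ t p.1 p.2.1 p.2.2)
        (Disc Rs ×ˢ Disc ρs ×ˢ Disc ρs))
    (hb₁h : ∀ t ∈ Set.Icc (0:ℝ) σs,
      DifferentiableOn ℂ (fun p : ℂ × ℂ × ℂ => b₁ t p.1 p.2.1 p.2.2)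
        (Disc Rs ×ˢ Disc ρs ×ˢ Disc ρs))
    (A₀ A₁ A₂ B₀ B₁ B₂ : ℝ)
    (hA₀ : 0 < A₀) (hA₁ : 0 < A₁) (hA₂ : 0 < A₂)
    (hB₀ : 0 < B₀) (hB₁ : 0 < B₁) (hB₂ : 0 < B₂)
    (ha₁bd : ∀ t ∈ Set.Ioc (0:ℝ) σs, ∀ x ∈ Disc Rs, ∀ w' ∈ Disc ρs, ∀ q' ∈ Disc ρs,
      ‖a₁ t x w' q'‖ ≤ A₀ * μ t + A₁ * ‖w'‖ + A₂ * ‖q'‖)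
    (hb₁bd : ∀ t ∈ Set.Ioc (0:ℝ) σs, ∀ x ∈ Disc Rs, ∀ w' ∈ Disc ρs, ∀ q' ∈ Disc ρs,
      ‖b₁ t x w' q'‖ ≤ B₀ * μ t + B₁ * ‖w'‖ + B₂ * ‖q'‖)
    -- `w` : a solution in `𝒳₁((0,σ₀) × D_{R₀})` of the reduced equation
    (σ₀ R₀ : ℝ) (hσ₀ : 0 < σ₀) (hσ₀s : σ₀ < σs) (hR₀ : 0 < R₀) (hR₀s : R₀ < Rs)
    (w : ℝ → ℂ → ℂ)
    (hwC1 : ContDiffOn ℝ 1 (fun p : ℝ × ℂ => w p.1 p.2) (Set.Ioo 0 σ₀ ×ˢ Disc R₀))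
    (hwH : ∀ t ∈ Set.Ioo (0:ℝ) σ₀, DifferentiableOn ℂ (w t) (Disc R₀))
    (hwsol : ∀ t ∈ Set.Ioo (0:ℝ) σ₀, ∀ x ∈ Disc R₀,
      (t : ℂ) * deriv (fun s : ℝ => w s x) t =
        lam t x * w t x + a₁ t x (w t x) (deriv (w t) x) * w t x +
          b₁ t x (w t x) (deriv (w t) x) * deriv (w t) x)
    -- condition (2.7)
    (hsmall : ∀ ε > 0, ∃ ρ' > 0, ∀ ρ ∈ Set.Ioo (0:ℝ) ρ', ∃ σ > 0,
      ∀ t ∈ Set.Ioo (0:ℝ) σ, ∀ x ∈ Disc ρ, ‖w t x‖ ≤ ε * ρ ^ 2) :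
    ∃ σ ∈ Set.Ioo (0:ℝ) σ₀, ∃ R ∈ Set.Ioo (0:ℝ) R₀, ∃ A Γ L r₁ r₂ : ℝ,
      (∀ t ∈ Set.Ioo (0:ℝ) σ, ∀ x ∈ Disc R,
        ‖a₁ t x (w t x) (deriv (w t) x)‖ ≤ A ∧
        ‖deriv (fun z : ℂ => lam t z) x +
            deriv (fun z : ℂ => a₁ t z (w t z) (deriv (w t) z)) x‖ ≤ Γ ∧
        ‖deriv (fun z : ℂ => b₁ t z (w t z) (deriv (w t) z)) x‖ ≤ L ∧
        ‖w t x‖ ≤ r₁ ∧ ‖deriv (w t) x‖ ≤ r₂) ∧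
      A + L < a ∧
      B₀ * phi μ σ + (B₁ / a + B₂ * Γ / a ^ 2) * r₁ + (B₂ / a) * r₂ < R / 2 :=
  choice_of_small_sigma_R_general σs Rs ρs hσs hρs μ hμ lam hlamc hlamh a ha a₁ b₁ ha₁h hb₁h A₀ A₁
    A₂ B₀ B₁ B₂ hA₀ hA₁ hA₂ hB₀ hB₁ hB₂ ha₁bd hb₁bd σ₀ R₀ hσ₀ hσ₀s hR₀ hR₀s w hwH hsmall
end
end

section
/- Let x(t) be a solution on an interval (t_ξ, t₀] of the characteristic ODE t dx/dt = −b(t,x), x(t₀) = ξ, where b ∈ 𝒳₀((0,σ) × D_R), and let w* (t) = w(t,x(t)), q*(t) = q(t,x(t)) where w, q satisfy along x(t) the ODEs t dw*/dt = (λ(t,x(t)) + a(t,x(t)))w* and t dq*/dt = γ(t,x(t))w* + (λ(t,x(t)) + a(t,x(t)) + ℓ(t,x(t)))q*. Assume Re(λ(s,x) + a(s,x)) < −a and Re(λ(s,x) + a(s,x) + ℓ(s,x)) < −a on (0,σ) × D_R, and |γ| ≤ Γ there. Then for any t₁, τ with t_ξ < t₁ < τ ≤ t₀: |w*(τ)|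 ≤ (t₁/τ)^a |w*(t₁)| and |q*(τ)| ≤ (t₁/τ)^a ( Γ|w*(t₁)| log(τ/t₁) + |q*(t₁)| ). -/
open Set MeasureTheory Complex

noncomputable section

/-!
Multiplying by `s ^ a` turns both equations into `s F' = k F + G` with `Re k ≤ 0`. Such a
dissipative equation lets `‖F‖` grow only through the forcing, `‖F τ‖ ≤ ‖F t₁‖ + ∫ ‖G s‖ / s`.
For `w*` there is no forcing; for `q*` the forcing `s ^ a γ w*` is at most `Γ t₁ ^ a |w*(t₁)|` by
the estimate for `w*`, and its integral against `ds / s` is the logarithm.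
-/

theorem norm_le_add_of_inner_deriv_le {E : Type*} [NormedAddCommGroup E] [InnerProductSpace ℝ E]
    {F F' : ℝ → E} {β β' : ℝ → ℝ} {u v : ℝ} (huv : u ≤ v)
    (hF : ∀ s ∈ Icc u v, HasDerivAt F (F' s) s) (hβ : ∀ s ∈ Icc u v, HasDerivAt β (β' s) s)
    (hβ' : ∀ s ∈ Icc u v, 0 ≤ β' s)
    (hinner : ∀ s ∈ Icc u v, inner ℝ (F s) (F' s) ≤ ‖F s‖ * β' s) :
    ‖F v‖ ≤ ‖F u‖ + (β v - β u) := by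
  refine le_of_forall_pos_le_add fun ε hε => ?_
  -- `‖F‖` need not be differentiable where `F` vanishes, so we smooth it to `√(‖F‖² + ε²)`.
  have hpos : ∀ s, 0 < ‖F s‖ ^ 2 + ε ^ 2 := fun s => by positivity
  have hderiv : ∀ s ∈ Icc u v, HasDerivAt (fun s => √(‖F s‖ ^ 2 + ε ^ 2) - β s)
      (inner ℝ (F s) (F' s) / √(‖F s‖ ^ 2 + ε ^ 2) - β' s) s := fun s hs =>
    ((((hF s hs).norm_sq.add_const (ε ^ 2)).sqrt (hpos s).ne').fun_sub (hβ s hs)).congr_deriv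
      (by field_simp)
  have hderiv_nonpos : ∀ s ∈ Icc u v,
      inner ℝ (F s) (F' s) / √(‖F s‖ ^ 2 + ε ^ 2) - β' s ≤ 0 := by
    intro s hs
    have hF_le : ‖F s‖ ≤ √(‖F s‖ ^ 2 + ε ^ 2) := Real.le_sqrt_of_sq_le (by nlinarith)
    rw [sub_nonpos, div_le_iff₀ (Real.sqrt_pos.2 (hpos s))]
    nlinarith [hinner s hs, hβ' s hs]
  have hanti : AntitoneOn (fun s => √(‖F s‖ ^ 2 + ε ^ 2) - β s) (Icc u v) :=
    antitoneOn_of_hasDerivWithinAt_nonpos (convex_Icc u v)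
      (fun s hs => (hderiv s hs).continuousAt.continuousWithinAt)
      (fun s hs => (hderiv s (interior_subset hs)).hasDerivWithinAt)
      (fun s hs => hderiv_nonpos s (interior_subset hs))
  have huv' := hanti ⟨le_rfl, huv⟩ ⟨huv, le_rfl⟩ huv
  have hv : ‖F v‖ ≤ √(‖F v‖ ^ 2 + ε ^ 2) := Real.le_sqrt_of_sq_le (by nlinarith)
  have hu : √(‖F u‖ ^ 2 + ε ^ 2) ≤ ‖F u‖ + ε :=
    Real.sqrt_le_iff.2 ⟨by positivity, by nlinarith [norm_nonneg (F u)]⟩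
  simp only at huv'
  linarith

theorem Complex.inner_mul_self_add_le {k : ℂ} (hk : k.re ≤ 0) (z g : ℂ) :
    inner ℝ z (k * z + g) ≤ ‖z‖ * ‖g‖ := by
  have hkz : inner ℝ z (k * z) = k.re * ‖z‖ ^ 2 := by
    rw [Complex.inner, mul_assoc, Complex.mul_conj, Complex.normSq_eq_norm_sq,
      Complex.re_mul_ofReal]
  rw [inner_add_right, hkz]
  nlinarith [real_inner_le_norm z g, sq_nonneg ‖z‖]

theorem rpow_mul_norm_le_of_hasDerivAt_euler {f g c : ℝ → ℂ} {β β' : ℝ → ℝ} {a u v : ℝ}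
    (hu : 0 < u) (huv : u ≤ v)
    (hf : ∀ s ∈ Icc u v, HasDerivAt f ((g s + c s * f s) / s) s)
    (hc : ∀ s ∈ Icc u v, (c s).re ≤ -a)
    (hβ : ∀ s ∈ Icc u v, HasDerivAt β (β' s) s)
    (hg : ∀ s ∈ Icc u v, s ^ (a - 1) * ‖g s‖ ≤ β' s) :
    v ^ a * ‖f v‖ ≤ u ^ a * ‖f u‖ + (β v - β u) := by
  have hpos : ∀ s ∈ Icc u v, 0 < s := fun s hs => hu.trans_le hs.1
  have hnorm : ∀ s ∈ Icc u v, ‖s ^ a • f s‖ = s ^ a * ‖f s‖ := fun s hs => by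
    rw [norm_smul, Real.norm_of_nonneg (Real.rpow_nonneg (hpos s hs).le a)]
  rw [← hnorm v ⟨huv, le_rfl⟩, ← hnorm u ⟨le_rfl, huv⟩]
  -- `s ^ a • f s` solves `s F' = (c + a) F + s ^ a g`, whose coefficient has nonpositive real part.
  refine norm_le_add_of_inner_deriv_le (F := fun s => s ^ a • f s)
    (F' := fun s => s ^ (a - 1) • ((c s + a) * f s + g s))
    huv (fun s hs => ?_) hβ (fun s hs => ?_) (fun s hs => ?_)
  · have hs0 := hpos s hs
    refine ((Real.hasDerivAt_rpow_const (Or.inl hs0.ne')).smul (hf s hs)).congr_deriv ?_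
    rw [Real.rpow_sub_one hs0.ne']
    simp only [Complex.real_smul]
    push_cast
    field_simp
    ring
  · have hs0 := hpos s hs
    exact (by positivity : 0 ≤ s ^ (a - 1) * ‖g s‖).trans (hg s hs)
  · have hs0 := hpos s hs
    have hca : (c s + a).re ≤ 0 := by
      simp only [Complex.add_re, Complex.ofReal_re]
      linarith [hc s hs]
    rw [real_inner_smul_left, real_inner_smul_right, hnorm s hs]
    calc s ^ a * (s ^ (a - 1) * inner ℝ (f s) ((c s + a) * f s + g s))
        ≤ s ^ a * (s ^ (a - 1) * (‖f s‖ * ‖g s‖)) := by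
          gcongr
          exact Complex.inner_mul_self_add_le hca (f s) (g s)
      _ = s ^ a * ‖f s‖ * (s ^ (a - 1) * ‖g s‖) := by ring
      _ ≤ s ^ a * ‖f s‖ * β' s := by gcongr; exact hg s hs

theorem norm_le_div_rpow_mul_log_add_of_hasDerivAt_euler {f g c : ℝ → ℂ} {a u v M : ℝ}
    (hu : 0 < u) (huv : u ≤ v)
    (hf : ∀ s ∈ Icc u v, HasDerivAt f ((g s + c s * f s) / s) s)
    (hc : ∀ s ∈ Icc u v, (c s).re ≤ -a)
    (hg : ∀ s ∈ Icc u v, ‖g s‖ ≤ M * (u / s) ^ a) :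
    ‖f v‖ ≤ (u / v) ^ a * (M * Real.log (v / u) + ‖f u‖) := by
  have hv : 0 < v := hu.trans_le huv
  have hforcing : ∀ s ∈ Icc u v, s ^ (a - 1) * ‖g s‖ ≤ M * u ^ a / s := fun s hs => by
    have hs0 : 0 < s := hu.trans_le hs.1
    calc s ^ (a - 1) * ‖g s‖ ≤ s ^ (a - 1) * (M * (u / s) ^ a) := by gcongr; exact hg s hs
      _ = M * u ^ a / s := by
        rw [Real.rpow_sub_one hs0.ne', Real.div_rpow hu.le hs0.le]
        field_simp
  have hlog : ∀ s ∈ Icc u v, HasDerivAt (fun s => M * u ^ a * Real.log s) (M * u ^ a / s) s :=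
    fun s hs => ((Real.hasDerivAt_log (hu.trans_le hs.1).ne').const_mul _).congr_deriv
      (div_eq_mul_inv _ _).symm
  have := rpow_mul_norm_le_of_hasDerivAt_euler hu huv hf hc hlog hforcing
  rw [Real.log_div hv.ne' hu.ne', Real.div_rpow hu.le hv.le, div_mul_eq_mul_div,
    le_div_iff₀ (by positivity)]
  linarith

theorem decay_along_characteristics_general
    (σ R : ℝ)
    (lam af gam ell : ℝ → ℂ → ℂ)
    (a : ℝ) (Γ : ℝ)
    (hRe₁ : ∀ t ∈ Set.Ioo (0:ℝ) σ, ∀ z ∈ Disc R, (lam t z + af t z).re < -a)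
    (hRe₂ : ∀ t ∈ Set.Ioo (0:ℝ) σ, ∀ z ∈ Disc R,
      (lam t z + af t z + ell t z).re < -a)
    (hγbd : ∀ t ∈ Set.Ioo (0:ℝ) σ, ∀ z ∈ Disc R, ‖gam t z‖ ≤ Γ)
    -- the characteristic curve
    (tξ t₀ : ℝ) (htξ : 0 ≤ tξ) (ht₀σ : t₀ < σ)
    (x : ℝ → ℂ)
    (hxmem : ∀ t ∈ Set.Ioc tξ t₀, x t ∈ Disc R)
    -- `w*`, `q*` along the curve
    (w q : ℝ → ℂ → ℂ)
    (hwode : ∀ t ∈ Set.Ioc tξ t₀, HasDerivAt (fun s : ℝ => w s (x s))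
      ((lam t (x t) + af t (x t)) * w t (x t) / (t : ℂ)) t)
    (hqode : ∀ t ∈ Set.Ioc tξ t₀, HasDerivAt (fun s : ℝ => q s (x s))
      ((gam t (x t) * w t (x t) +
        (lam t (x t) + af t (x t) + ell t (x t)) * q t (x t)) / (t : ℂ)) t) :
    ∀ t₁ τ : ℝ, tξ < t₁ → t₁ < τ → τ ≤ t₀ →
      ‖w τ (x τ)‖ ≤ (t₁ / τ) ^ a * ‖w t₁ (x t₁)‖ ∧
      ‖q τ (x τ)‖ ≤ (t₁ / τ) ^ a *
        (Γ * ‖w t₁ (x t₁)‖ * Real.log (τ / t₁) + ‖q t₁ (x t₁)‖) := by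
  intro t₁ τ ht₁ hlt hτ
  have ht₁0 : 0 < t₁ := htξ.trans_lt ht₁
  have hcurve : ∀ s ∈ Icc t₁ τ, s ∈ Ioc tξ t₀ := fun s hs => ⟨ht₁.trans_le hs.1, hs.2.trans hτ⟩
  have hdomain : ∀ s ∈ Icc t₁ τ, s ∈ Ioo 0 σ ∧ x s ∈ Disc R := fun s hs =>
    ⟨⟨ht₁0.trans_le hs.1, (hs.2.trans hτ).trans_lt ht₀σ⟩, hxmem s (hcurve s hs)⟩
  have hw : ∀ s ∈ Icc t₁ τ, ‖w s (x s)‖ ≤ (t₁ / s) ^ a * ‖w t₁ (x t₁)‖ := fun s hs => by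
    have hsub : Icc t₁ s ⊆ Icc t₁ τ := Icc_subset_Icc_right hs.2
    simpa using norm_le_div_rpow_mul_log_add_of_hasDerivAt_euler (g := 0) (M := 0) ht₁0 hs.1
      (fun r hr => by simpa using hwode r (hcurve r (hsub hr)))
      (fun r hr => (hRe₁ r (hdomain r (hsub hr)).1 _ (hdomain r (hsub hr)).2).le) (by simp)
  refine ⟨hw τ ⟨hlt.le, le_rfl⟩, ?_⟩
  refine norm_le_div_rpow_mul_log_add_of_hasDerivAt_euler ht₁0 hlt.le
    (fun s hs => hqode s (hcurve s hs))
    (fun s hs => (hRe₂ s (hdomain s hs).1 _ (hdomain s hs).2).le) (fun s hs => ?_)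
  have hγ := hγbd s (hdomain s hs).1 _ (hdomain s hs).2
  calc ‖gam s (x s) * w s (x s)‖ ≤ Γ * ((t₁ / s) ^ a * ‖w t₁ (x t₁)‖) := by
        rw [norm_mul]
        exact mul_le_mul hγ (hw s hs) (norm_nonneg _) ((norm_nonneg _).trans hγ)
    _ = Γ * ‖w t₁ (x t₁)‖ * (t₁ / s) ^ a := by ring

/-- Lemma 2.7 : decay estimates along a characteristic curve.  If `x(t)` solves
`t dx/dt = -b(t,x)`, `x(t₀) = ξ`, and `w*(t) = w(t,x(t))`, `q*(t) = q(t,x(t))` satisfy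
`t dw*/dt = (λ + a) w*` and `t dq*/dt = γ w* + (λ + a + ℓ) q*` along the curve, with
`Re(λ + a) < -a`, `Re(λ + a + ℓ) < -a` and `|γ| ≤ Γ` on `(0,σ) × D_R`, then
for `t_ξ < t₁ < τ ≤ t₀` one has `|w*(τ)| ≤ (t₁/τ)^a |w*(t₁)|` and
`|q*(τ)| ≤ (t₁/τ)^a (Γ |w*(t₁)| log(τ/t₁) + |q*(t₁)|)`. -/
theorem decay_along_characteristics
    (σ R : ℝ) (hσ : 0 < σ) (hR : 0 < R)
    (lam af gam ell b : ℝ → ℂ → ℂ)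
    -- `λ, a, γ, ℓ, b ∈ 𝒳₀((0,σ) × D_R)`
    (hlamX : ContinuousOn (fun p : ℝ × ℂ => lam p.1 p.2) (Set.Ioo 0 σ ×ˢ Disc R) ∧
      ∀ t ∈ Set.Ioo (0:ℝ) σ, DifferentiableOn ℂ (lam t) (Disc R))
    (hafX : ContinuousOn (fun p : ℝ × ℂ => af p.1 p.2) (Set.Ioo 0 σ ×ˢ Disc R) ∧
      ∀ t ∈ Set.Ioo (0:ℝ) σ, DifferentiableOn ℂ (af t) (Disc R))
    (hgamX : ContinuousOn (fun p : ℝ × ℂ => gam p.1 p.2) (Set.Ioo 0 σ ×ˢ Disc R) ∧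
      ∀ t ∈ Set.Ioo (0:ℝ) σ, DifferentiableOn ℂ (gam t) (Disc R))
    (hellX : ContinuousOn (fun p : ℝ × ℂ => ell p.1 p.2) (Set.Ioo 0 σ ×ˢ Disc R) ∧
      ∀ t ∈ Set.Ioo (0:ℝ) σ, DifferentiableOn ℂ (ell t) (Disc R))
    (hbX : ContinuousOn (fun p : ℝ × ℂ => b p.1 p.2) (Set.Ioo 0 σ ×ˢ Disc R) ∧
      ∀ t ∈ Set.Ioo (0:ℝ) σ, DifferentiableOn ℂ (b t) (Disc R))
    (a : ℝ) (ha : 0 < a) (Γ : ℝ) (hΓ : 0 ≤ Γ)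
    (hRe₁ : ∀ t ∈ Set.Ioo (0:ℝ) σ, ∀ z ∈ Disc R, (lam t z + af t z).re < -a)
    (hRe₂ : ∀ t ∈ Set.Ioo (0:ℝ) σ, ∀ z ∈ Disc R,
      (lam t z + af t z + ell t z).re < -a)
    (hγbd : ∀ t ∈ Set.Ioo (0:ℝ) σ, ∀ z ∈ Disc R, ‖gam t z‖ ≤ Γ)
    -- the characteristic curve
    (tξ t₀ : ℝ) (htξ : 0 ≤ tξ) (ht₀ : tξ < t₀) (ht₀σ : t₀ < σ)
    (ξ : ℂ) (x : ℝ → ℂ)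
    (hxmem : ∀ t ∈ Set.Ioc tξ t₀, x t ∈ Disc R)
    (hxode : ∀ t ∈ Set.Ioc tξ t₀, HasDerivAt x (-(b t (x t)) / (t : ℂ)) t)
    (hxinit : x t₀ = ξ)
    -- `w*`, `q*` along the curve
    (w q : ℝ → ℂ → ℂ)
    (hwode : ∀ t ∈ Set.Ioc tξ t₀, HasDerivAt (fun s : ℝ => w s (x s))
      ((lam t (x t) + af t (x t)) * w t (x t) / (t : ℂ)) t)
    (hqode : ∀ t ∈ Set.Ioc tξ t₀, HasDerivAt (fun s : ℝ => q s (x s))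
      ((gam t (x t) * w t (x t) +
        (lam t (x t) + af t (x t) + ell t (x t)) * q t (x t)) / (t : ℂ)) t) :
    ∀ t₁ τ : ℝ, tξ < t₁ → t₁ < τ → τ ≤ t₀ →
      ‖w τ (x τ)‖ ≤ (t₁ / τ) ^ a * ‖w t₁ (x t₁)‖ ∧
      ‖q τ (x τ)‖ ≤ (t₁ / τ) ^ a *
        (Γ * ‖w t₁ (x t₁)‖ * Real.log (τ / t₁) + ‖q t₁ (x t₁)‖) :=
  decay_along_characteristics_general σ R lam af gam ell a Γ hRe₁ hRe₂ hγbd tξ t₀ htξ ht₀σ x hxmem w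
    q hwode hqode
end
end

section
/- Let x(t) solve t dx/dt = −b(t,x), x(t₀) = ξ on (t_ξ, t₀] ⊂ (0,σ), where b satisfies the bound |b(t,x)| ≤ B₀μ(t) + B₁|w(t,x)| + B₂|q(t,x)| with w*(t) = w(t,x(t)), q*(t) = q(t,x(t)) satisfying, for t_ξ < t₁ < τ ≤ t₀, |w*(τ)| ≤ (t₁/τ)^a |w*(t₁)| and |q*(τ)| ≤ (t₁/τ)^a ( Γ|w*(t₁)| log(τ/t₁) + |q*(t₁)| ) for some a > 0, Γ ≥ 0. Then for any t₁ ∈ (t_ξ, t₀): |x(t₁)| ≤ |ξ| + B₀(φ(t₀) − φ(t₁)) + (B₁/a + B₂Γ/a²)|w*(t₁)| + (B₂/a)|q*(t₁)|, where φ(t) = ∫₀^t μ(s)/s ds. -/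
/-!
Integrating `t x' = -b` from `t₁` to `t₀` gives `‖x t₁‖ ≤ ‖ξ‖ + ∫_{t₁}^{t₀} ‖b(t, x t)‖ / t dt`.
The decay estimates, taken from the base point `t₁`, bound the integrand by `B₀ μ(t)/t` plus
nonnegative multiples of the kernels `(t₁/t)^a / t` and `(t₁/t)^a log(t/t₁) / t`. These have the
antiderivatives `-(t₁/t)^a / a` and `-(t₁/t)^a (log(t/t₁)/a + 1/a²)`, which are nonpositive and
equal `-1/a`, `-1/a²` at `t₁`, so their integrals over `[t₁, t₀]` are at most `1/a` and `1/a²`.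
-/

open Set MeasureTheory Complex

noncomputable section

section Kernels

variable {a t₁ t₀ t : ℝ}

theorem hasDerivAt_div_rpow (h₁ : 0 < t₁) (ht : 0 < t) :
    HasDerivAt (fun s => (t₁ / s) ^ a) (-a * (t₁ / t) ^ a / t) t := by
  have hpos : 0 < t₁ / t := div_pos h₁ ht
  have h := ((hasDerivAt_inv ht.ne').const_mul t₁).rpow_const (p := a) (Or.inl hpos.ne')
  simp only [← div_eq_mul_inv] at h
  convert h using 1
  rw [Real.rpow_sub_one hpos.ne']
  field_simp

theorem hasDerivAt_neg_div_rpow_div (ha : a ≠ 0) (h₁ : 0 < t₁) (ht : 0 < t) :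
    HasDerivAt (fun s => -(t₁ / s) ^ a / a) ((t₁ / t) ^ a / t) t :=
  ((hasDerivAt_div_rpow h₁ ht).fun_neg.div_const a).congr_deriv (by field_simp)

theorem hasDerivAt_neg_div_rpow_mul_log (ha : a ≠ 0) (h₁ : 0 < t₁) (ht : 0 < t) :
    HasDerivAt (fun s => -(t₁ / s) ^ a * (Real.log (s / t₁) / a + 1 / a ^ 2))
      ((t₁ / t) ^ a * Real.log (t / t₁) / t) t := by
  have hlog : HasDerivAt (fun s => Real.log (s / t₁)) t⁻¹ t :=
    (((hasDerivAt_id' t).div_const t₁).log (div_pos ht h₁).ne').congr_deriv (by field_simp)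
  refine ((hasDerivAt_div_rpow h₁ ht).fun_neg.fun_mul
    ((hlog.div_const a).add_const (1 / a ^ 2))).congr_deriv ?_
  field_simp
  ring

theorem intervalIntegrable_of_hasDerivAt_of_nonneg {F f : ℝ → ℝ} {a b : ℝ} (hab : a ≤ b)
    (hF : ∀ t ∈ Icc a b, HasDerivAt F (f t) t) (hf : ∀ t ∈ Ioo a b, 0 ≤ f t) :
    IntervalIntegrable f volume a b :=
  (intervalIntegrable_iff_integrableOn_Ioc_of_le hab).2 <|
    intervalIntegral.integrableOn_deriv_of_nonneg (HasDerivAt.continuousOn hF)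
      (fun t ht => hF t (Ioo_subset_Icc_self ht)) hf

theorem intervalIntegrable_div_rpow_div (ha : a ≠ 0) (h₁ : 0 < t₁) (h₁₀ : t₁ ≤ t₀) :
    IntervalIntegrable (fun t => (t₁ / t) ^ a / t) volume t₁ t₀ :=
  intervalIntegrable_of_hasDerivAt_of_nonneg h₁₀
    (fun t ht => hasDerivAt_neg_div_rpow_div ha h₁ (h₁.trans_le ht.1))
    (fun t ht => by have := h₁.trans ht.1; positivity)

theorem integral_div_rpow_div_le (ha : 0 < a) (h₁ : 0 < t₁) (h₁₀ : t₁ ≤ t₀) :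
    ∫ t in t₁..t₀, (t₁ / t) ^ a / t ≤ 1 / a := by
  rw [intervalIntegral.integral_eq_sub_of_hasDerivAt
    (fun t ht => hasDerivAt_neg_div_rpow_div ha.ne' h₁ (h₁.trans_le (uIcc_of_le h₁₀ ▸ ht).1))
    (intervalIntegrable_div_rpow_div ha.ne' h₁ h₁₀), div_self h₁.ne', Real.one_rpow]
  have : 0 ≤ (t₁ / t₀) ^ a / a := by have := h₁.trans_le h₁₀; positivity
  linarith [neg_div a ((t₁ / t₀) ^ a), neg_div a (1 : ℝ)]

theorem intervalIntegrable_div_rpow_mul_log_div (ha : a ≠ 0) (h₁ : 0 < t₁) (h₁₀ : t₁ ≤ t₀) :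
    IntervalIntegrable (fun t => (t₁ / t) ^ a * Real.log (t / t₁) / t) volume t₁ t₀ :=
  intervalIntegrable_of_hasDerivAt_of_nonneg h₁₀
    (fun t ht => hasDerivAt_neg_div_rpow_mul_log ha h₁ (h₁.trans_le ht.1))
    (fun t ht => by
      have := h₁.trans ht.1
      have := Real.log_nonneg ((one_le_div h₁).2 ht.1.le)
      positivity)

theorem integral_div_rpow_mul_log_div_le (ha : 0 < a) (h₁ : 0 < t₁) (h₁₀ : t₁ ≤ t₀) :
    ∫ t in t₁..t₀, (t₁ / t) ^ a * Real.log (t / t₁) / t ≤ 1 / a ^ 2 := by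
  rw [intervalIntegral.integral_eq_sub_of_hasDerivAt
    (fun t ht => hasDerivAt_neg_div_rpow_mul_log ha.ne' h₁ (h₁.trans_le (uIcc_of_le h₁₀ ▸ ht).1))
    (intervalIntegrable_div_rpow_mul_log_div ha.ne' h₁ h₁₀), div_self h₁.ne', Real.one_rpow,
    Real.log_one]
  have : 0 ≤ (t₁ / t₀) ^ a * (Real.log (t₀ / t₁) / a + 1 / a ^ 2) := by
    have := h₁.trans_le h₁₀
    have := Real.log_nonneg ((one_le_div h₁).2 h₁₀)
    positivity
  simp only [zero_div, zero_add, neg_mul, one_mul]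
  linarith

end Kernels

theorem phi_sub_phi {μ : ℝ → ℝ} {t₁ t₀ : ℝ} (hμ : IntegrableOn (fun s => μ s / s) (Ioc 0 t₀))
    (h₁ : 0 ≤ t₁) (h₁₀ : t₁ ≤ t₀) : phi μ t₀ - phi μ t₁ = ∫ s in t₁..t₀, μ s / s := by
  have hint : ∀ t ∈ Icc 0 t₀, IntervalIntegrable (fun s => μ s / s) volume 0 t := fun t ht =>
    (intervalIntegrable_iff_integrableOn_Ioc_of_le ht.1).2
      (hμ.mono_set (Ioc_subset_Ioc_right ht.2))
  simp only [phi, ← intervalIntegral.integral_of_le (h₁.trans h₁₀),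
    ← intervalIntegral.integral_of_le h₁]
  exact intervalIntegral.integral_interval_sub_left (hint t₀ ⟨h₁.trans h₁₀, le_rfl⟩)
    (hint t₁ ⟨h₁, h₁₀⟩)

theorem norm_sub_le_of_norm_deriv_le_weight_add_kernels {E : Type*} [NormedAddCommGroup E]
    [NormedSpace ℝ E] {f : ℝ → E} {μ : ℝ → ℝ} {B₀ c₁ c₂ a t₁ t₀ : ℝ} (ha : 0 < a)
    (h₁ : 0 < t₁) (h₁₀ : t₁ ≤ t₀) (hμ : IntegrableOn (fun s => μ s / s) (Ioc 0 t₀))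
    (hc₁ : 0 ≤ c₁) (hc₂ : 0 ≤ c₂) (hf : ∀ t ∈ Icc t₁ t₀, DifferentiableAt ℝ f t)
    (hf' : ∀ t ∈ Ioo t₁ t₀, ‖deriv f t‖ ≤ B₀ * (μ t / t) +
      (c₁ * ((t₁ / t) ^ a / t) + c₂ * ((t₁ / t) ^ a * Real.log (t / t₁) / t))) :
    ‖f t₀ - f t₁‖ ≤ B₀ * (phi μ t₀ - phi μ t₁) + (c₁ / a + c₂ / a ^ 2) := by
  have hi₀ : IntervalIntegrable (fun s => μ s / s) volume t₁ t₀ :=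
    (intervalIntegrable_iff_integrableOn_Ioc_of_le h₁₀).2
      (hμ.mono_set (Ioc_subset_Ioc_left h₁.le))
  have hi₁ := (intervalIntegrable_div_rpow_div ha.ne' h₁ h₁₀).const_mul c₁
  have hi₂ := (intervalIntegrable_div_rpow_mul_log_div ha.ne' h₁ h₁₀).const_mul c₂
  have hdisp := norm_sub_le_integral_of_norm_deriv_le_of_le h₁₀
    (fun t ht => (hf t ht).continuousAt.continuousWithinAt)
    (fun t ht => (hf t (Ioo_subset_Icc_self ht)).differentiableWithinAt)
    (ae_of_all _ hf') ((hi₀.const_mul B₀).add (hi₁.add hi₂))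
  rw [intervalIntegral.integral_add (hi₀.const_mul B₀) (hi₁.add hi₂),
    intervalIntegral.integral_add hi₁ hi₂, intervalIntegral.integral_const_mul,
    intervalIntegral.integral_const_mul, intervalIntegral.integral_const_mul,
    ← phi_sub_phi hμ h₁.le h₁₀] at hdisp
  grw [hdisp, integral_div_rpow_div_le ha h₁ h₁₀, integral_div_rpow_mul_log_div_le ha h₁ h₁₀]
  simp only [mul_one_div, le_refl]

theorem norm_neg_div_le_of_decay {β : ℂ} {t B₀ B₁ B₂ Γ m k L W Q Cw Cq : ℝ} (ht : 0 < t)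
    (hB₁ : 0 ≤ B₁) (hB₂ : 0 ≤ B₂) (hβ : ‖β‖ ≤ B₀ * m + B₁ * W + B₂ * Q) (hW : W ≤ k * Cw)
    (hQ : Q ≤ k * (Γ * Cw * L + Cq)) :
    ‖-β / (t : ℂ)‖ ≤
      B₀ * (m / t) + ((B₁ * Cw + B₂ * Cq) * (k / t) + B₂ * Γ * Cw * (k * L / t)) := by
  rw [norm_div, norm_neg, Complex.norm_real, Real.norm_of_nonneg ht.le]
  calc ‖β‖ / t ≤ (B₀ * m + B₁ * (k * Cw) + B₂ * (k * (Γ * Cw * L + Cq))) / t := by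
        gcongr
        exact hβ.trans (by gcongr)
    _ = _ := by field_simp; ring

theorem bound_on_characteristics_general
    (σ : ℝ)
    (μ : ℝ → ℝ) (hμ : IsWeight σ μ)
    (B₀ B₁ B₂ : ℝ) (hB₁ : 0 < B₁) (hB₂ : 0 < B₂)
    (a : ℝ) (ha : 0 < a) (Γ : ℝ) (hΓ : 0 ≤ Γ)
    (b : ℝ → ℂ → ℂ) (w q : ℝ → ℂ → ℂ)
    (tξ t₀ : ℝ) (htξ : 0 ≤ tξ) (ht₀σ : t₀ ≤ σ)
    (ξ : ℂ) (x : ℝ → ℂ)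
    (hxode : ∀ t ∈ Set.Ioc tξ t₀, HasDerivAt x (-(b t (x t)) / (t : ℂ)) t)
    (hxinit : x t₀ = ξ)
    (hbbd : ∀ t ∈ Set.Ioc tξ t₀,
      ‖b t (x t)‖ ≤ B₀ * μ t + B₁ * ‖w t (x t)‖ + B₂ * ‖q t (x t)‖)
    (hdecay : ∀ t₁ τ : ℝ, tξ < t₁ → t₁ < τ → τ ≤ t₀ →
      ‖w τ (x τ)‖ ≤ (t₁ / τ) ^ a * ‖w t₁ (x t₁)‖ ∧
      ‖q τ (x τ)‖ ≤ (t₁ / τ) ^ a *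
        (Γ * ‖w t₁ (x t₁)‖ * Real.log (τ / t₁) + ‖q t₁ (x t₁)‖)) :
    ∀ t₁ ∈ Set.Ioo tξ t₀,
      ‖x t₁‖ ≤ ‖ξ‖ + B₀ * (phi μ t₀ - phi μ t₁) +
        (B₁ / a + B₂ * Γ / a ^ 2) * ‖w t₁ (x t₁)‖ + (B₂ / a) * ‖q t₁ (x t₁)‖ := by
  rintro t₁ ⟨hξ₁, h₁₀⟩
  have h₁ : 0 < t₁ := htξ.trans_lt hξ₁
  have hsub : Icc t₁ t₀ ⊆ Ioc tξ t₀ := fun t ht => ⟨hξ₁.trans_le ht.1, ht.2⟩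
  have hspeed : ∀ t ∈ Ioo t₁ t₀, ‖deriv x t‖ ≤ B₀ * (μ t / t) +
      ((B₁ * ‖w t₁ (x t₁)‖ + B₂ * ‖q t₁ (x t₁)‖) * ((t₁ / t) ^ a / t) +
        B₂ * Γ * ‖w t₁ (x t₁)‖ * ((t₁ / t) ^ a * Real.log (t / t₁) / t)) := by
    intro t ht
    have ht' : t ∈ Ioc tξ t₀ := hsub (Ioo_subset_Icc_self ht)
    obtain ⟨hw, hq⟩ := hdecay t₁ t hξ₁ ht.1 ht.2.le
    rw [(hxode t ht').deriv]
    exact norm_neg_div_le_of_decay (h₁.trans ht.1) hB₁.le hB₂.le (hbbd t ht') hw hq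
  have hdisp := norm_sub_le_of_norm_deriv_le_weight_add_kernels ha h₁ h₁₀.le
    (hμ.2.2.2.mono_set (Ioc_subset_Ioc_right ht₀σ)) (by positivity) (by positivity)
    (fun t ht => (hxode t (hsub ht)).differentiableAt) hspeed
  have htri : ‖x t₁‖ ≤ ‖x t₀‖ + ‖x t₀ - x t₁‖ := norm_le_norm_add_norm_sub _ _
  rw [hxinit] at htri hdisp
  linear_combination htri + hdisp

/-- Lemma 2.8 : bound on the characteristic curve.  If `x(t)` solves
`t dx/dt = -b(t,x)`, `x(t₀) = ξ` on `(t_ξ, t₀] ⊂ (0,σ)`, with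
`|b(t,x)| ≤ B₀μ(t) + B₁|w(t,x)| + B₂|q(t,x)|` along the curve, and `w* = w(·,x(·))`,
`q* = q(·,x(·))` satisfy the decay estimates of Lemma 2.7, then for `t₁ ∈ (t_ξ,t₀)`,
`|x(t₁)| ≤ |ξ| + B₀(φ(t₀) - φ(t₁)) + (B₁/a + B₂Γ/a²)|w*(t₁)| + (B₂/a)|q*(t₁)|`. -/
theorem bound_on_characteristics
    (σ : ℝ) (hσ : 0 < σ)
    (μ : ℝ → ℝ) (hμ : IsWeight σ μ)
    (B₀ B₁ B₂ : ℝ) (hB₀ : 0 < B₀) (hB₁ : 0 < B₁) (hB₂ : 0 < B₂)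
    (a : ℝ) (ha : 0 < a) (Γ : ℝ) (hΓ : 0 ≤ Γ)
    (b : ℝ → ℂ → ℂ) (w q : ℝ → ℂ → ℂ)
    (tξ t₀ : ℝ) (htξ : 0 ≤ tξ) (ht₀ : tξ < t₀) (ht₀σ : t₀ ≤ σ)
    (ξ : ℂ) (x : ℝ → ℂ)
    (hxode : ∀ t ∈ Set.Ioc tξ t₀, HasDerivAt x (-(b t (x t)) / (t : ℂ)) t)
    (hxinit : x t₀ = ξ)
    (hbbd : ∀ t ∈ Set.Ioc tξ t₀,
      ‖b t (x t)‖ ≤ B₀ * μ t + B₁ * ‖w t (x t)‖ + B₂ * ‖q t (x t)‖)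
    (hdecay : ∀ t₁ τ : ℝ, tξ < t₁ → t₁ < τ → τ ≤ t₀ →
      ‖w τ (x τ)‖ ≤ (t₁ / τ) ^ a * ‖w t₁ (x t₁)‖ ∧
      ‖q τ (x τ)‖ ≤ (t₁ / τ) ^ a *
        (Γ * ‖w t₁ (x t₁)‖ * Real.log (τ / t₁) + ‖q t₁ (x t₁)‖)) :
    ∀ t₁ ∈ Set.Ioo tξ t₀,
      ‖x t₁‖ ≤ ‖ξ‖ + B₀ * (phi μ t₀ - phi μ t₁) +
        (B₁ / a + B₂ * Γ / a ^ 2) * ‖w t₁ (x t₁)‖ + (B₂ / a) * ‖q t₁ (x t₁)‖ :=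
  bound_on_characteristics_general σ μ hμ B₀ B₁ B₂ hB₁ hB₂ a ha Γ hΓ b w q tξ t₀ htξ ht₀σ ξ x hxode
    hxinit hbbd hdecay
end
end

section
/- Let f be a holomorphic function on the sector S(θ,R) = {x ∈ ℂ : 0 < |x| < R, |arg x| < θ}. If sup_{S(ηθ, ηR)} |f(x)| = o(η^m) as η → +0 for some m ≥ 1, then sup_{S(ηθ, ηR)} |x f'(x)| = o(η^{m−1}) as η → +0. -/
/-!
A point `x` of `S(α, r)` with `α < π` is the centre of a closed disc of radius `(α / π) ‖x‖`
contained in `S(2α, 2r)`: points of the disc are within angle `α` of `x`, since the angle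
between `y` and `x` is at most `π ‖y - x‖ / ‖x‖`. The Cauchy estimate on that disc bounds
`‖x f'(x)‖` by `π / α` times the supremum of `‖f‖` on `S(2α, 2r)`. With `α = ηθ` and
`r = ηR` this is `o((2η)^m) / η = o(η^(m-1))`.
-/

open Set Complex

noncomputable section

/-- The sector `S(θ,R) = {x ∈ ℂ : 0 < |x| < R, |arg x| < θ}`. -/
def Sect (θ R : ℝ) : Set ℂ := {x : ℂ | x ≠ 0 ∧ ‖x‖ < R ∧ |Complex.arg x| < θ}

open InnerProductGeometry Metric Real

lemma Complex.abs_arg_le_pi_mul_norm_sub_one {w : ℂ} (hw : w ≠ 0) :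
    |arg w| ≤ π * ‖w - 1‖ := by
  set u : ℂ := (‖w‖⁻¹ : ℝ) • w
  have hu : ‖u‖ = 1 := norm_smul_inv_norm hw
  have hwu : ‖u - w‖ ≤ ‖w - 1‖ :=
    calc ‖u - w‖ = |‖w‖⁻¹ - 1| * |‖w‖| := by
          rw [show u - w = (‖w‖⁻¹ - 1 : ℝ) • w by simp only [u, sub_smul, one_smul], norm_smul,
            Real.norm_eq_abs, abs_norm]
      _ = |1 - ‖w‖| := by rw [← abs_mul, sub_mul, inv_mul_cancel₀ (norm_ne_zero_iff.2 hw), one_mul]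
      _ ≤ ‖w - 1‖ := by rw [norm_sub_rev w 1]; simpa only [norm_one] using abs_norm_sub_norm_le 1 w
  calc |arg w| = angle u 1 := by
        rw [← angle_one_right hw, angle_smul_left_of_pos _ _ (by positivity)]
    _ ≤ π / 2 * ‖u - 1‖ := angle_le_mul_norm_sub hu norm_one
    _ ≤ π / 2 * (‖u - w‖ + ‖w - 1‖) := by gcongr; exact norm_sub_le_norm_sub_add_norm_sub u w 1
    _ ≤ π * ‖w - 1‖ := by nlinarith [pi_pos]

lemma Complex.angle_le_pi_mul_norm_sub_div_norm {x y : ℂ} (hx : x ≠ 0) (hy : y ≠ 0) :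
    angle y x ≤ π * ‖y - x‖ / ‖x‖ := by
  rw [angle_eq_abs_arg hy hx, mul_div_assoc, ← norm_div, sub_div, div_self hx]
  exact abs_arg_le_pi_mul_norm_sub_one (div_ne_zero hy hx)

lemma Sect_mono {θ θ' R R' : ℝ} (hθ : θ ≤ θ') (hR : R ≤ R') : Sect θ R ⊆ Sect θ' R' :=
  fun _ ⟨hx, hxR, hxθ⟩ ↦ ⟨hx, hxR.trans_le hR, hxθ.trans_le hθ⟩

lemma closedBall_subset_Sect {x : ℂ} {θ R s : ℝ} (hx : x ∈ Sect θ R) (hs0 : 0 ≤ s) (hs1 : s < 1) :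
    closedBall x (s * ‖x‖) ⊆ Sect (θ + π * s) ((1 + s) * R) := by
  obtain ⟨hx0, hxR, hxθ⟩ := hx
  have hxpos : 0 < ‖x‖ := norm_pos_iff.2 hx0
  intro y hy
  rw [mem_closedBall, dist_eq_norm] at hy
  have hy0 : y ≠ 0 := by
    rintro rfl
    rw [zero_sub, norm_neg] at hy
    nlinarith
  refine ⟨hy0, ?_, ?_⟩
  · calc ‖y‖ ≤ ‖x‖ + ‖y - x‖ := norm_le_insert' y x
      _ ≤ (1 + s) * ‖x‖ := by linarith
      _ < (1 + s) * R := by gcongr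
  · have hangle : angle y x ≤ π * s := by
      calc angle y x ≤ π * ‖y - x‖ / ‖x‖ := angle_le_pi_mul_norm_sub_div_norm hx0 hy0
        _ ≤ π * s := by rw [mul_div_assoc]; gcongr; rwa [div_le_iff₀ hxpos]
    calc |arg y| = angle y 1 := (angle_one_right hy0).symm
      _ ≤ angle y x + angle x 1 := angle_le_angle_add_angle y x 1
      _ < θ + π * s := by rw [angle_one_right hx0]; linarith

lemma norm_mul_deriv_le_of_forall_mem_sphere {f : ℂ → ℂ} {x : ℂ} {s M : ℝ} (hx : x ≠ 0)
    (hs : 0 < s) (hf : DifferentiableOn ℂ f (closedBall x (s * ‖x‖)))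
    (hM : ∀ z ∈ sphere x (s * ‖x‖), ‖f z‖ ≤ M) : ‖x * deriv f x‖ ≤ M / s := by
  have hxpos : 0 < ‖x‖ := norm_pos_iff.2 hx
  have hderiv := Complex.norm_deriv_le_of_forall_mem_sphere_norm_le (by positivity)
    (hf.diffContOnCl_ball subset_rfl) hM
  calc ‖x * deriv f x‖ ≤ ‖x‖ * (M / (s * ‖x‖)) := by rw [norm_mul]; gcongr
    _ = M / s := by field_simp

lemma norm_mul_deriv_le_of_mem_Sect {f : ℂ → ℂ} {x : ℂ} {α r M : ℝ} (hα : α < π)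
    (hf : DifferentiableOn ℂ f (Sect (2 * α) (2 * r)))
    (hM : ∀ z ∈ Sect (2 * α) (2 * r), ‖f z‖ ≤ M) (hx : x ∈ Sect α r) :
    ‖x * deriv f x‖ ≤ π * M / α := by
  have hα0 : 0 < α := (abs_nonneg _).trans_lt hx.2.2
  have hr0 : 0 ≤ r := (norm_nonneg x).trans hx.2.1.le
  have hs1 : α / π < 1 := (div_lt_one pi_pos).2 hα
  have hball : closedBall x (α / π * ‖x‖) ⊆ Sect (2 * α) (2 * r) :=
    (closedBall_subset_Sect hx (by positivity) hs1).trans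
      (Sect_mono (by field_simp; linarith) (by nlinarith))
  calc ‖x * deriv f x‖ ≤ M / (α / π) := norm_mul_deriv_le_of_forall_mem_sphere hx.1
        (by positivity) (hf.mono hball) fun z hz ↦ hM z (hball (sphere_subset_closedBall hz))
    _ = π * M / α := by field_simp

theorem nagumo_sector_estimate_general
    (θ R : ℝ) (hθ : 0 < θ) (hR : 0 < R)
    (f : ℂ → ℂ) (hf : DifferentiableOn ℂ f (Sect θ R))
    (m : ℝ)
    (hsmall : ∀ ε > 0, ∃ η₀ > 0, ∀ η ∈ Set.Ioo (0:ℝ) η₀,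
      ∀ x ∈ Sect (η * θ) (η * R), ‖f x‖ ≤ ε * η ^ m) :
    ∀ ε > 0, ∃ η₀ > 0, ∀ η ∈ Set.Ioo (0:ℝ) η₀,
      ∀ x ∈ Sect (η * θ) (η * R), ‖x * deriv f x‖ ≤ ε * η ^ (m - 1) := by
  intro ε hε
  obtain ⟨η₁, hη₁, hsmall₁⟩ := hsmall (ε * θ / (π * 2 ^ m)) (by positivity)
  refine ⟨min (η₁ / 2) (min (1 / 2) (π / θ)), by positivity, ?_⟩
  rintro η ⟨hη, hηη₀⟩ x hx
  simp only [lt_min_iff, lt_div_iff₀ hθ] at hηη₀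
  obtain ⟨hηη₁, hη_half, hηθ⟩ := hηη₀
  have hdouble : Sect (2 * (η * θ)) (2 * (η * R)) = Sect (2 * η * θ) (2 * η * R) := by
    simp only [mul_assoc]
  calc ‖x * deriv f x‖ ≤ π * (ε * θ / (π * 2 ^ m) * (2 * η) ^ m) / (η * θ) := by
        refine norm_mul_deriv_le_of_mem_Sect hηθ (hf.mono ?_) ?_ hx <;> rw [hdouble]
        · exact Sect_mono (by nlinarith) (by nlinarith)
        · exact hsmall₁ (2 * η) ⟨by positivity, by linarith⟩
    _ = ε * η ^ (m - 1) := by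
        rw [mul_rpow zero_le_two hη.le, rpow_sub_one hη.ne']
        field_simp

/-- Lemma 4.6 : if `f` is holomorphic on `S(θ,R)` and
`sup_{S(ηθ,ηR)} |f| = o(η^m)` as `η → +0` for some `m ≥ 1`, then
`sup_{S(ηθ,ηR)} |x f'(x)| = o(η^{m-1})` as `η → +0`. -/
theorem nagumo_sector_estimate
    (θ R : ℝ) (hθ : 0 < θ) (hR : 0 < R)
    (f : ℂ → ℂ) (hf : DifferentiableOn ℂ f (Sect θ R))
    (m : ℝ) (hm : 1 ≤ m)
    (hsmall : ∀ ε > 0, ∃ η₀ > 0, ∀ η ∈ Set.Ioo (0:ℝ) η₀,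
      ∀ x ∈ Sect (η * θ) (η * R), ‖f x‖ ≤ ε * η ^ m) :
    ∀ ε > 0, ∃ η₀ > 0, ∀ η ∈ Set.Ioo (0:ℝ) η₀,
      ∀ x ∈ Sect (η * θ) (η * R), ‖x * deriv f x‖ ≤ ε * η ^ (m - 1) :=
  nagumo_sector_estimate_general θ R hθ hR f hf m hsmall
end
end
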